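/- arXiv:math/0101010 — 3 statements merged into one kernel-verified Lean document; each statement's English description precedes it below -/
import Mathlib

section
/- Let G be a group, φ : G → G an endomorphism, N the normal subgroup of nilpotent elements of φ, and [φ/N] : G/N → G/N the induced endomorphism, [φ/N](xN) = φ(x)N. Then for x, y ∈ G: x and y are φ-conjugate in G if and only if xN and yN are [φ/N]-conjugate in G/N. Consequently the quotient map x ↦ xN induces a bijection from the set of φ-conjugacy classes of G onto the set of [φ/N]-conjugacy classes of G/N, and R(φ) = R([φ/N]). -/
/-!
If `xN` and `yN` are `[φ/N]`-conjugate, then `y = n z` with `z` φ-conjugate to `x` and `n ∈ N`.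
It remains to see that `n z` is φ-conjugate to `z`: solving `γ z φ(γ)⁻¹ = n z` means
`γ ξ(γ)⁻¹ = n` for the endomorphism `ξ = (z · z⁻¹) ∘ φ`, for which `n` is still nilpotent,
and `n = γ ξ(γ)⁻¹` is solved by induction on the nilpotency index,
telescoping `γ = n ξ(n) ⋯ ξ^(k-1)(n)`.
-/

section

variable {G H : Type*} [Group G] [Group H]

def TwistedConj (φ : G →* G) (x y : G) : Prop :=
  ∃ γ : G, y = γ * x * (φ γ)⁻¹

theorem twistedConj_equivalence (φ : G →* G) : Equivalence (TwistedConj φ) where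
  refl x := ⟨1, by simp⟩
  symm := by
    rintro x y ⟨γ, rfl⟩
    exact ⟨γ⁻¹, by rw [map_inv]; group⟩
  trans := by
    rintro x y z ⟨γ, rfl⟩ ⟨δ, rfl⟩
    exact ⟨δ * γ, by rw [map_mul]; group⟩

theorem TwistedConj.map {φ : G →* G} {ψ : H →* H} (f : G →* H) (hf : ∀ x, ψ (f x) = f (φ x))
    {x y : G} (h : TwistedConj φ x y) : TwistedConj ψ (f x) (f y) := by
  obtain ⟨γ, rfl⟩ := h
  exact ⟨f γ, by rw [hf]; simp only [map_mul, map_inv]⟩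

theorem exists_mul_map_inv_eq_of_iterate_eq_one (ξ : G →* G) {k : ℕ} :
    ∀ {n : G}, ξ^[k] n = 1 → ∃ γ : G, γ * (ξ γ)⁻¹ = n := by
  induction k with
  | zero => intro n h; exact ⟨1, by simp_all⟩
  | succ k ih =>
    intro n h
    obtain ⟨γ, hγ⟩ := ih (Function.iterate_succ_apply _ _ _ ▸ h)
    refine ⟨n * γ, ?_⟩
    rw [map_mul, mul_inv_rev, ← mul_assoc, mul_assoc n, hγ]
    group

theorem iterate_conj_comp_eq_one_of_iterate_eq_one (φ : G →* G) (z : G) {k : ℕ} :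
    ∀ {n : G}, φ^[k] n = 1 → ((MulAut.conj z).toMonoidHom.comp φ)^[k] n = 1 := by
  induction k with
  | zero => intro n h; simpa using h
  | succ k ih =>
    intro n h
    rw [Function.iterate_succ_apply] at h ⊢
    change (_)^[k] (z * φ n * z⁻¹) = 1
    rw [iterate_map_mul, iterate_map_mul, ih h, iterate_map_inv]
    group

theorem twistedConj_mul_of_iterate_eq_one (φ : G →* G) (z : G) {k : ℕ} {n : G}
    (hn : φ^[k] n = 1) : TwistedConj φ z (n * z) := by
  obtain ⟨γ, hγ⟩ := exists_mul_map_inv_eq_of_iterate_eq_one _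
    (iterate_conj_comp_eq_one_of_iterate_eq_one φ z hn)
  refine ⟨γ, ?_⟩
  rw [← hγ]
  change γ * (z * φ γ * z⁻¹)⁻¹ * z = γ * z * (φ γ)⁻¹
  group

theorem twistedConj_iff_of_surjective {φ : G →* G} {ψ : H →* H} {f : G →* H}
    (hsurj : Function.Surjective f) (hf : ∀ x, ψ (f x) = f (φ x))
    (hker : ∀ n ∈ f.ker, ∃ k : ℕ, φ^[k] n = 1) (x y : G) :
    TwistedConj φ x y ↔ TwistedConj ψ (f x) (f y) := by
  refine ⟨TwistedConj.map f hf, ?_⟩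
  rintro ⟨δ, hδ⟩
  obtain ⟨γ, rfl⟩ := hsurj δ
  set z := γ * x * (φ γ)⁻¹
  have hfz : f y = f z := by simp only [hδ, z, hf, map_mul, map_inv]
  obtain ⟨k, hk⟩ := hker (y * z⁻¹) (by simp [hfz])
  have hzy : TwistedConj φ z (y * z⁻¹ * z) := twistedConj_mul_of_iterate_eq_one φ z hk
  rw [inv_mul_cancel_right] at hzy
  exact (twistedConj_equivalence φ).trans ⟨γ, rfl⟩ hzy

theorem Quot.map_injective {α β : Type*} {r : α → α → Prop} {s : β → β → Prop} {f : α → β}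
    (h : ∀ ⦃a b⦄, r a b → s (f a) (f b)) (hs : Equivalence s)
    (hf : ∀ a b, s (f a) (f b) → r a b) : Function.Injective (Quot.map f h) := by
  rintro ⟨a⟩ ⟨b⟩ hab
  exact Quot.sound (hf a b ((hs.eqvGen_iff).mp (Quot.eq.mp hab)))

end

/-- Let `N` be the normal subgroup of nilpotent elements of an endomorphism `φ`
of a group `G`, and let `[φ/N] = ψ` be the induced endomorphism of `G/N`,
`ψ(xN) = φ(x)N`.  Then `x, y ∈ G` are `φ`-conjugate iff `xN` and `yN` are
`ψ`-conjugate in `G/N`; consequently `x ↦ xN` induces a bijection from the set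
of `φ`-conjugacy classes of `G` onto the set of `ψ`-conjugacy classes of `G/N`,
and `R(φ) = R([φ/N])`. -/
theorem phi_conjugacy_classes_biject_with_quotient_classes {G : Type*} [Group G]
    (φ : G →* G) (N : Subgroup G) [N.Normal]
    (hN : (N : Set G) = {x : G | ∃ n : ℕ, (⇑φ)^[n] x = 1})
    (ψ : G ⧸ N →* G ⧸ N) (hψ : ∀ x : G, ψ (x : G ⧸ N) = ((φ x : G) : G ⧸ N)) :
    (∀ x y : G,
        (∃ γ : G, y = γ * x * (φ γ)⁻¹) ↔
          ∃ δ : G ⧸ N, (y : G ⧸ N) = δ * (x : G ⧸ N) * (ψ δ)⁻¹) ∧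
      (∃ B : Quot (fun x y : G => ∃ γ : G, y = γ * x * (φ γ)⁻¹) ≃
          Quot (fun x y : G ⧸ N => ∃ δ : G ⧸ N, y = δ * x * (ψ δ)⁻¹),
        ∀ x : G, B (Quot.mk _ x) = Quot.mk _ (x : G ⧸ N)) ∧
      Cardinal.mk (Quot (fun x y : G => ∃ γ : G, y = γ * x * (φ γ)⁻¹)) =
        Cardinal.mk (Quot (fun x y : G ⧸ N => ∃ δ : G ⧸ N, y = δ * x * (ψ δ)⁻¹)) := by
  have hker : ∀ n ∈ (QuotientGroup.mk' N).ker, ∃ k : ℕ, φ^[k] n = 1 := by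
    intro n hn
    rw [QuotientGroup.ker_mk'] at hn
    exact (Set.ext_iff.mp hN n).mp hn
  have key := twistedConj_iff_of_surjective (QuotientGroup.mk'_surjective N) hψ hker
  have hmap : ∀ ⦃x y⦄, TwistedConj φ x y → TwistedConj ψ (x : G ⧸ N) y := fun x y =>
    (key x y).mp
  let B : Quot (TwistedConj φ) ≃ Quot (TwistedConj ψ) := Equiv.ofBijective (Quot.map _ hmap)
    ⟨Quot.map_injective hmap (twistedConj_equivalence ψ) fun x y => (key x y).mpr,
      Quot.map_surjective hmap (QuotientGroup.mk'_surjective N)⟩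
  exact ⟨key, ⟨B, fun _ => rfl⟩, Cardinal.mk_congr B⟩
end

section
/- Let G be a group, α an automorphism of G, and for h ∈ G let i_h denote the inner automorphism i_h(g) = h·g·h⁻¹. For m, n ∈ G, the automorphisms β = i_m ∘ α and γ = i_n ∘ α are isogredient (i.e., there exists g ∈ G with γ = i_g ∘ β ∘ i_g⁻¹) if and only if there exist g ∈ G and an element c of the center Z(G) of G such that n = g · m · α(g)⁻¹ · c. -/
/-! Conjugating `i_m ∘ α` by `i_g` gives `i_{g m α(g)⁻¹} ∘ α`, and `i_k ∘ α = i_n ∘ α` exactly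
when `i_k = i_n`, i.e. when `k⁻¹ n` is central, since the kernel of `h ↦ i_h` is `Z(G)`. -/

namespace MulAut

variable {G : Type*} [Group G]

theorem conj_eq_one_iff {c : G} : conj c = 1 ↔ c ∈ Subgroup.center G := by
  simp only [DFunLike.ext_iff, conj_apply, one_apply, mul_inv_eq_iff_eq_mul,
    Subgroup.mem_center_iff]
  exact forall_congr' fun _ => eq_comm

theorem conj_eq_conj_iff {k n : G} : conj k = conj n ↔ k⁻¹ * n ∈ Subgroup.center G := by
  rw [← conj_eq_one_iff, map_mul, map_inv, inv_mul_eq_one]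

theorem conj_mul_conj_mul_mul_conj_inv (α : MulAut G) (g m : G) :
    conj g * (conj m * α) * (conj g)⁻¹ = conj (g * m * (α g)⁻¹) * α := by
  ext x
  simp only [mul_apply, conj_apply, conj_inv_apply, map_mul, map_inv]

end MulAut

theorem Subgroup.inv_mul_mem_iff_exists_eq_mul {G : Type*} [Group G] (H : Subgroup G)
    {k n : G} : k⁻¹ * n ∈ H ↔ ∃ c ∈ H, n = k * c :=
  ⟨fun h => ⟨_, h, (mul_inv_cancel_left k n).symm⟩, by rintro ⟨c, hc, rfl⟩; simpa using hc⟩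

/-- For `m, n ∈ G` and an automorphism `α` of `G`, the automorphisms
`β = i_m ∘ α` and `γ = i_n ∘ α` (where `i_h` is the inner automorphism
`g ↦ h * g * h⁻¹`) are isogredient — i.e. `γ = i_g ∘ β ∘ i_g⁻¹` for some `g` —
iff there exist `g ∈ G` and a central element `c` with `n = g * m * (α g)⁻¹ * c`. -/
theorem isogredient_iff_twisted_conjugate_mod_center {G : Type*} [Group G]
    (α : MulAut G) (m n : G) :
    (∃ g : G,
        MulAut.conj n * α = MulAut.conj g * (MulAut.conj m * α) * (MulAut.conj g)⁻¹) ↔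
      ∃ g c : G, c ∈ Subgroup.center G ∧ n = g * m * (α g)⁻¹ * c := by
  refine exists_congr fun g => ?_
  rw [MulAut.conj_mul_conj_mul_mul_conj_inv, mul_left_inj, eq_comm, MulAut.conj_eq_conj_iff,
    Subgroup.inv_mul_mem_iff_exists_eq_mul]
end

section
/- Let G be a group containing elements a, b that freely generate a free subgroup of rank 2 (i.e., the homomorphism from the free group on two generators sending the generators to a and b is injective). Let u ∈ G and let p, q be nonzero integers such that u·aᵖ·u⁻¹ = a⁻ᵖ and u·b^q·u⁻¹ = b^{-q}. Then for c = aᵖ·b^q one has u·c·u⁻¹ ≠ c⁻¹. -/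
/-!
Conjugating `c = a^p * b^q` by `u` gives `a^(-p) * b^(-q)`, while `c⁻¹ = b^(-q) * a^(-p)`; so if
the two agreed, `a^p` and `b^q` would commute. In a free group distinct generators have no
commuting nontrivial powers: send them to `T = !![1, 1; 0, 1]` and `L = !![1, 0; 1, 1]` in
`SL(2, ℤ)`; then `T^m * L^n` and `L^n * T^m` have top-left entries `1 + m * n` and `1`.
-/

open ModularGroup MatrixGroups

theorem commute_of_conj_mul_eq_inv {G : Type*} [Group G] {x y u : G}
    (hx : u * x * u⁻¹ = x⁻¹) (hy : u * y * u⁻¹ = y⁻¹) (h : u * (x * y) * u⁻¹ = (x * y)⁻¹) :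
    Commute x y := by
  rw [← Commute.inv_inv_iff]
  calc x⁻¹ * y⁻¹ = (u * x * u⁻¹) * (u * y * u⁻¹) := by rw [hx, hy]
    _ = u * (x * y) * u⁻¹ := by group
    _ = y⁻¹ * x⁻¹ := by rw [h, mul_inv_rev]

namespace ModularGroup

open Matrix

noncomputable def lowerT : SL(2, ℤ) := S * T⁻¹ * S⁻¹

theorem coe_lowerT_zpow (n : ℤ) : ↑(lowerT ^ n) = !![1, 0; n, 1] := by
  have hS_inv : ((S⁻¹ : SL(2, ℤ)) : Matrix (Fin 2) (Fin 2) ℤ) = !![0, 1; -1, 0] := by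
    rw [Matrix.SpecialLinearGroup.SL2_inv_expl]; simp [coe_S]; rfl
  rw [lowerT, conj_zpow, _root_.inv_zpow', Matrix.SpecialLinearGroup.coe_mul,
    Matrix.SpecialLinearGroup.coe_mul, coe_T_zpow, coe_S, hS_inv, mul_fin_two, mul_fin_two]
  simp

theorem not_commute_T_zpow_lowerT_zpow {m n : ℤ} (hm : m ≠ 0) (hn : n ≠ 0) :
    ¬Commute (T ^ m) (lowerT ^ n) := fun h => by
  have h00 := congrArg (fun A : SL(2, ℤ) => (A : Matrix (Fin 2) (Fin 2) ℤ) 0 0) h.eq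
  simp only [Matrix.SpecialLinearGroup.coe_mul, coe_T_zpow, coe_lowerT_zpow, mul_fin_two,
    of_apply, cons_val', cons_val_zero, empty_val', cons_val_fin_one] at h00
  exact mul_ne_zero hm hn (by linarith)

end ModularGroup

theorem FreeGroup.not_commute_of_zpow_of_zpow {α : Type*} [DecidableEq α] {x y : α} (hxy : x ≠ y)
    {m n : ℤ} (hm : m ≠ 0) (hn : n ≠ 0) : ¬Commute (of x ^ m) (of y ^ n) := fun h => by
  let ρ := FreeGroup.lift fun z => if z = x then T else if z = y then lowerT else 1
  have hρ := h.map ρ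
  simp only [ρ, map_zpow, lift_apply_of, if_neg hxy.symm] at hρ
  exact not_commute_T_zpow_lowerT_zpow hm hn hρ

/-- Let `a, b ∈ G` freely generate a free subgroup of rank `2`, let `u ∈ G`,
and let `p, q` be nonzero integers with `u * a^p * u⁻¹ = a^(-p)` and
`u * b^q * u⁻¹ = b^(-q)`.  Then for `c = a^p * b^q` one has `u * c * u⁻¹ ≠ c⁻¹`. -/
theorem conj_ne_inv_of_free_pair {G : Type*} [Group G] (a b u : G)
    (hfree : Function.Injective ⇑(FreeGroup.lift (fun i : Bool => if i then a else b)))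
    (p q : ℤ) (hp : p ≠ 0) (hq : q ≠ 0)
    (ha : u * a ^ p * u⁻¹ = a ^ (-p)) (hb : u * b ^ q * u⁻¹ = b ^ (-q)) :
    u * (a ^ p * b ^ q) * u⁻¹ ≠ (a ^ p * b ^ q)⁻¹ := by
  intro h
  rw [zpow_neg] at ha hb
  have hab : Commute (a ^ p) (b ^ q) := commute_of_conj_mul_eq_inv ha hb h
  have hgen : Commute (FreeGroup.of true ^ p) (FreeGroup.of false ^ q) :=
    Commute.of_map hfree (by simpa using hab)
  exact FreeGroup.not_commute_of_zpow_of_zpow (by decide) hp hq hgen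
end
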